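/- Let p be a prime number and let π, ρ, τ be monic polynomials over 𝕃_p, each of degree at least 1, such that π = ρ · τ. Then π is expansive if and only if both ρ and τ are expansive. -/

import Mathlib

open LaurentPolynomial
open scoped Classical

/-- `𝕃 m`: Laurent polynomials over `ℤ/mℤ`. -/
abbrev Lm (m : ℕ) := LaurentPolynomial (ZMod m)

/-- `deg⁺` of a Laurent polynomial: the max of its support (`⊥ = -∞` for `0`). -/
noncomputable def degP {m : ℕ} (α : Lm m) : WithBot ℤ := (AddMonoidAlgebra.coeff α).support.max

/-- `deg⁻` of a Laurent polynomial: the min of its support (`⊤ = +∞` for `0`). -/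
noncomputable def degM {m : ℕ} (α : Lm m) : WithTop ℤ := (AddMonoidAlgebra.coeff α).support.min

/-- A monic polynomial `π(t) = α₀ + α₁ t + ⋯ + α_{n-1} t^{n-1} + tⁿ` over `𝕃 m`
is *expansive* if `α₀ ≠ 0`, `deg⁺(α₀) > 0`, `deg⁺(α₀) > deg⁺(αᵢ)`,
`deg⁻(α₀) < 0` and `deg⁻(α₀) < deg⁻(αᵢ)` for all `1 ≤ i ≤ n-1`. -/
def ExpansivePoly {m : ℕ} (π : Polynomial (Lm m)) : Prop :=
  π.coeff 0 ≠ 0 ∧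
  ((0 : WithBot ℤ) < degP (π.coeff 0) ∧
    ∀ i : ℕ, 1 ≤ i → i < π.natDegree → degP (π.coeff i) < degP (π.coeff 0)) ∧
  (degM (π.coeff 0) < (0 : WithTop ℤ) ∧
    ∀ i : ℕ, 1 ≤ i → i < π.natDegree → degM (π.coeff 0) < degM (π.coeff i))

/-- A matrix over `𝕃 m` is expansive if its characteristic polynomial is. -/
noncomputable def ExpansiveMatrix {m n : ℕ} (A : Matrix (Fin n) (Fin n) (Lm m)) : Prop :=
  ExpansivePoly A.charpoly

/-- The Tychonoff distance on the configuration space `(ℤ → S)`. -/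
noncomputable def tdist {S : Type*} (c c' : ℤ → S) : ℝ :=
  if c = c' then 0
  else (2 : ℝ) ^ (-((sInf {k : ℕ | ∃ j : ℤ, j.natAbs = k ∧ c j ≠ c' j} : ℕ) : ℤ))

/-- A map on the configuration space is positively expansive if for some `ε > 0`
any two distinct configurations are eventually `≥ ε` apart. -/
def PosExpansive {S : Type*} (F : (ℤ → S) → (ℤ → S)) : Prop :=
  ∃ ε : ℝ, 0 < ε ∧ ∀ c c' : ℤ → S, c ≠ c' →
    ∃ ℓ : ℕ, ε ≤ tdist (F^[ℓ] c) (F^[ℓ] c')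

/-- The linear CA over `(ℤ/mℤ)ⁿ` determined by a matrix `A ∈ 𝕃_m^{n×n}`:
`F_A(c)_i = ∑_{k ∈ ℤ} A⁽ᵏ⁾ · c_{i-k}` where `A⁽ᵏ⁾` is the coefficient matrix of `Xᵏ` in `A`.
The same formula gives the action of `A` on two-sided formal power series `𝕊_m^n`. -/
noncomputable def lcaFun {m n : ℕ} (A : Matrix (Fin n) (Fin n) (Lm m)) :
    (ℤ → Fin n → ZMod m) → (ℤ → Fin n → ZMod m) :=
  fun c i a => ∑ b, Finsupp.sum (AddMonoidAlgebra.coeff (A a b)) (fun k coef => coef * c (i - k) b)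

/-- `Left(𝕊ⁿ_m, s)`: two-sided series with `deg⁺ = s`. -/
def SLeft {V : Type*} [Zero V] (s : ℤ) : Set (ℤ → V) :=
  {υ | (∀ j : ℤ, s < j → υ j = 0) ∧ υ s ≠ 0}

/-- `Left*(𝕊ⁿ_m, s)`: two-sided series with `deg⁺ ≤ s`. -/
def SLeftStar {V : Type*} [Zero V] (s : ℤ) : Set (ℤ → V) :=
  {υ | ∀ j : ℤ, s < j → υ j = 0}

/-- `Right(𝕊ⁿ_m, s)`: two-sided series with `deg⁻ = s`. -/
def SRight {V : Type*} [Zero V] (s : ℤ) : Set (ℤ → V) :=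
  {υ | (∀ j : ℤ, j < s → υ j = 0) ∧ υ s ≠ 0}

/-- `Right*(𝕊ⁿ_m, s)`: two-sided series with `deg⁻ ≥ s`. -/
def SRightStar {V : Type*} [Zero V] (s : ℤ) : Set (ℤ → V) :=
  {υ | ∀ j : ℤ, j < s → υ j = 0}

/-- Reduction of a Laurent polynomial over `ℤ/mℤ` modulo `q` (for `q ∣ m`). -/
noncomputable def lmod {m q : ℕ} (h : q ∣ m) (α : Lm m) : Lm q :=
  AddMonoidAlgebra.ofCoeff (Finsupp.mapRange (ZMod.castHom h (ZMod q)) (map_zero _) (AddMonoidAlgebra.coeff α))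

/-- Entrywise reduction of a matrix of Laurent polynomials modulo `q`. -/
noncomputable def matMod {m q n : ℕ} (h : q ∣ m) (B : Matrix (Fin n) (Fin n) (Lm m)) :
    Matrix (Fin n) (Fin n) (Lm q) :=
  fun a b => lmod h (B a b)

/-- `deg⁺` on the field of fractions of `𝕃 p`: `deg⁺(α/β) = deg⁺(α) - deg⁺(β)`,
computed on a representation given by `IsLocalization.sec`; `deg⁺ 0 = ⊥`. -/
noncomputable def degPF {p : ℕ} (φ : FractionRing (Lm p)) : WithBot ℤ :=
  if φ = 0 then ⊥
  else ((WithBot.unbotD 0 (degP ((IsLocalization.sec (nonZeroDivisors (Lm p)) φ).1))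
        - WithBot.unbotD 0 (degP (((IsLocalization.sec (nonZeroDivisors (Lm p)) φ).2 : Lm p))) : ℤ) : WithBot ℤ)

/-- The `(x, y)` entry (with `ℕ`-indices) of the companion matrix of a polynomial `π`
viewed as a `d × d` matrix: subdiagonal entries `1`,
last column `(-π.coeff 0, …, -π.coeff (d-1))ᵀ`, the rest `0`. -/
def companionEntry {R : Type*} [CommRing R] (d : ℕ) (π : Polynomial R) (x y : ℕ) : R :=
  if y = d - 1 then -π.coeff x else if x = y + 1 then 1 else 0

/-- The companion matrix (as a `d × d` matrix) of a polynomial `π`. -/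
def companionMatrix {R : Type*} [CommRing R] (d : ℕ) (π : Polynomial R) :
    Matrix (Fin d) (Fin d) R :=
  fun a b => companionEntry d π a b

/-- A matrix is in rational canonical form if it is block diagonal with blocks the
companion matrices of monic polynomials `π₁, …, π_s` of degree at least one with
`πᵢ ∣ πⱼ` for `i ≤ j`.  The blocks are described by the offsets `off i` of their
top-left corners. -/
def IsRCF {R : Type*} [CommRing R] {n : ℕ} (C : Matrix (Fin n) (Fin n) R) : Prop :=
  ∃ (s : ℕ) (π : Fin s → Polynomial R) (off : Fin (s + 1) → ℕ),
    (∀ i, (π i).Monic) ∧ (∀ i, 1 ≤ (π i).natDegree) ∧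
    (∀ i j, i ≤ j → π i ∣ π j) ∧
    off 0 = 0 ∧ off (Fin.last s) = n ∧
    (∀ i : Fin s, off i.succ = off i.castSucc + (π i).natDegree) ∧
    (∀ (i : Fin s) (a b : Fin n),
      off i.castSucc ≤ (a : ℕ) → (a : ℕ) < off i.succ →
      off i.castSucc ≤ (b : ℕ) → (b : ℕ) < off i.succ →
      C a b = companionEntry (π i).natDegree (π i)
        ((a : ℕ) - off i.castSucc) ((b : ℕ) - off i.castSucc)) ∧
    (∀ a b : Fin n,
      (∀ i : Fin s, ¬(off i.castSucc ≤ (a : ℕ) ∧ (a : ℕ) < off i.succ ∧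
        off i.castSucc ≤ (b : ℕ) ∧ (b : ℕ) < off i.succ)) → C a b = 0)

/-! Call `n` a *last maximal index* of `f` for a valuation `v` if `v (f.coeff n)` is maximal among
the `v (f.coeff i)` and strictly exceeds all of them with `i > n`. As in Gauss's lemma, if `n` and
`m` are last maximal indices of `f` and `g`, then `n + m` is one of `f * g`: in
`(f * g).coeff k = ∑ f.coeff i * g.coeff j` the term `(n, m)` strictly dominates all others when
`k = n + m`, and every term is strictly smaller when `k > n + m`. Last maximal indices are unique,
so `0` is one for `f * g` iff it is one for both `f` and `g`.

For monic `π` of positive degree, `π` is expansive iff `0` is a last maximal index of `π` for the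
two valuations `exp ∘ deg⁺` and `exp ∘ deg⁺ ∘ invert = exp ∘ (-deg⁻)` on `𝕃_p`; these are
valuations because `ℤ/pℤ` is a domain. -/

open scoped WithZero

namespace Polynomial

section LastMaxCoeff

variable {R Γ₀ : Type*} [Ring R] [LinearOrderedCommGroupWithZero Γ₀]

def IsLastMaxCoeff (v : Valuation R Γ₀) (f : R[X]) (n : ℕ) : Prop :=
  (∀ i, v (f.coeff i) ≤ v (f.coeff n)) ∧ ∀ i, n < i → v (f.coeff i) < v (f.coeff n)

variable {v : Valuation R Γ₀} {f g : R[X]} {n m : ℕ}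

lemma IsLastMaxCoeff.valuation_pos (hf : IsLastMaxCoeff v f n) : 0 < v (f.coeff n) :=
  zero_le.trans_lt (hf.2 (n + 1) n.lt_succ_self)

lemma IsLastMaxCoeff.unique (hn : IsLastMaxCoeff v f n) (hm : IsLastMaxCoeff v f m) : n = m := by
  by_contra hne
  rcases Nat.lt_or_gt_of_ne hne with h | h
  · exact (hn.2 m h).not_ge (hm.1 n)
  · exact (hm.2 n h).not_ge (hn.1 m)

lemma exists_isLastMaxCoeff {k : ℕ} (hk : v (f.coeff k) ≠ 0) : ∃ n, IsLastMaxCoeff v f n := by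
  have hk' : k ∈ f.support := mem_support_iff.2 fun h => hk (by rw [h, map_zero])
  obtain ⟨n, -, hmax⟩ :=
    f.support.exists_max_image (fun i => toLex (v (f.coeff i), i)) ⟨k, hk'⟩
  have hpos : 0 < v (f.coeff n) := by
    refine (zero_le.lt_of_ne' hk).trans_le ?_
    rcases Prod.Lex.toLex_le_toLex.1 (hmax k hk') with h | h
    exacts [h.le, h.1.le]
  have hlex : ∀ i, v (f.coeff i) < v (f.coeff n) ∨ v (f.coeff i) = v (f.coeff n) ∧ i ≤ n := by
    intro i
    by_cases hi : i ∈ f.support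
    · exact Prod.Lex.toLex_le_toLex.1 (hmax i hi)
    · rw [notMem_support_iff.1 hi, map_zero]
      exact Or.inl hpos
  refine ⟨n, fun i => ?_, fun i hi => ?_⟩
  · rcases hlex i with h | h
    exacts [h.le, h.1.le]
  · rcases hlex i with h | h
    exacts [h, absurd h.2 hi.not_ge]

lemma IsLastMaxCoeff.valuation_mul_lt (hf : IsLastMaxCoeff v f n) (hg : IsLastMaxCoeff v g m)
    {i j : ℕ} (hij : n < i ∨ m < j) :
    v (f.coeff i * g.coeff j) < v (f.coeff n * g.coeff m) := by
  rw [map_mul, map_mul]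
  rcases hij with hi | hj
  · exact mul_lt_mul_of_lt_of_le_of_nonneg_of_pos (hf.2 i hi) (hg.1 j) zero_le hg.valuation_pos
  · exact mul_lt_mul_of_le_of_lt_of_nonneg_of_pos (hf.1 i) (hg.2 j hj) zero_le hf.valuation_pos

lemma IsLastMaxCoeff.valuation_coeff_mul (hf : IsLastMaxCoeff v f n) (hg : IsLastMaxCoeff v g m) :
    v ((f * g).coeff (n + m)) = v (f.coeff n * g.coeff m) := by
  rw [coeff_mul]
  refine v.map_sum_eq_of_lt (j := (n, m)) (by simp) fun x hx => ?_
  obtain ⟨hx, hne⟩ := Finset.mem_sdiff.1 hx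
  rw [Finset.HasAntidiagonal.mem_antidiagonal] at hx
  rw [Finset.mem_singleton, Prod.ext_iff] at hne
  exact hf.valuation_mul_lt hg (by omega)

lemma IsLastMaxCoeff.mul (hf : IsLastMaxCoeff v f n) (hg : IsLastMaxCoeff v g m) :
    IsLastMaxCoeff v (f * g) (n + m) := by
  rw [IsLastMaxCoeff, hf.valuation_coeff_mul hg]
  simp only [coeff_mul]
  refine ⟨fun k => v.map_sum_le fun x _ => ?_, fun k hk => ?_⟩
  · rw [map_mul, map_mul]
    exact mul_le_mul' (hf.1 _) (hg.1 _)
  · have hpos : v (f.coeff n * g.coeff m) ≠ 0 := by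
      rw [map_mul]
      exact mul_ne_zero hf.valuation_pos.ne' hg.valuation_pos.ne'
    refine v.map_sum_lt hpos fun x hx => ?_
    rw [Finset.HasAntidiagonal.mem_antidiagonal] at hx
    exact hf.valuation_mul_lt hg (by omega)

theorem isLastMaxCoeff_zero_mul_iff :
    IsLastMaxCoeff v (f * g) 0 ↔ IsLastMaxCoeff v f 0 ∧ IsLastMaxCoeff v g 0 := by
  refine ⟨fun hfg => ?_, fun ⟨hf, hg⟩ => hf.mul hg⟩
  have h0 := hfg.valuation_pos.ne'
  rw [mul_coeff_zero, map_mul] at h0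
  obtain ⟨n, hf⟩ := exists_isLastMaxCoeff (left_ne_zero_of_mul h0)
  obtain ⟨m, hg⟩ := exists_isLastMaxCoeff (right_ne_zero_of_mul h0)
  have hnm : n + m = 0 := (hf.mul hg).unique hfg
  obtain ⟨rfl, rfl⟩ : n = 0 ∧ m = 0 := by omega
  exact ⟨hf, hg⟩

theorem Monic.isLastMaxCoeff_zero_iff (hf : f.Monic) (hd : 1 ≤ f.natDegree) :
    IsLastMaxCoeff v f 0 ↔
      1 < v (f.coeff 0) ∧ ∀ i, 1 ≤ i → i < f.natDegree → v (f.coeff i) < v (f.coeff 0) := by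
  constructor
  · intro h
    refine ⟨?_, fun i hi _ => h.2 i hi⟩
    simpa [hf.coeff_natDegree] using h.2 f.natDegree hd
  · rintro ⟨h1, hlt⟩
    have hstrict : ∀ i, 0 < i → v (f.coeff i) < v (f.coeff 0) := by
      intro i hi
      rcases lt_trichotomy i f.natDegree with h | rfl | h
      · exact hlt i hi h
      · rwa [hf.coeff_natDegree, map_one]
      · rw [coeff_eq_zero_of_natDegree_lt h, map_zero]
        exact zero_lt_one.trans h1
    refine ⟨fun i => ?_, hstrict⟩
    rcases Nat.eq_zero_or_pos i with rfl | hi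
    exacts [le_rfl, (hstrict i hi).le]

end LastMaxCoeff

end Polynomial

namespace LaurentPolynomial

section Semiring

variable {R : Type*} [Semiring R]

lemma degree_eq_supDegree (f : R[T;T⁻¹]) : f.degree = f.supDegree (↑) :=
  Finset.max_eq_sup_coe

lemma degree_add_le (f g : R[T;T⁻¹]) : (f + g).degree ≤ max f.degree g.degree := by
  simp only [degree_eq_supDegree]
  exact AddMonoidAlgebra.supDegree_add_le

lemma degree_one [Nontrivial R] : (1 : R[T;T⁻¹]).degree = 0 := by
  rw [← T_zero, degree_T]
  rfl

lemma degree_mul [NoZeroDivisors R] (f g : R[T;T⁻¹]) : (f * g).degree = f.degree + g.degree := by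
  rcases eq_or_ne f 0 with rfl | hf
  · simp
  rcases eq_or_ne g 0 with rfl | hg
  · simp
  have hf' : f.coeff.support.Nonempty := by simpa using hf
  have hg' : g.coeff.support.Nonempty := by simpa using hg
  set a := f.coeff.support.max' hf'
  set b := g.coeff.support.max' hg'
  have hunique : UniqueAdd f.coeff.support g.coeff.support a b := fun x y hx hy hxy => by
    have := f.coeff.support.le_max' x hx
    have := g.coeff.support.le_max' y hy
    omega
  have hab : (f * g).coeff (a + b) ≠ 0 := by
    rw [AddMonoidAlgebra.coeff_mul_add_of_uniqueAdd hunique]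
    exact mul_ne_zero (Finsupp.mem_support_iff.1 (f.coeff.support.max'_mem hf'))
      (Finsupp.mem_support_iff.1 (g.coeff.support.max'_mem hg'))
  have hdeg : f.degree + g.degree = ↑(a + b) := by
    rw [degree, degree, ← Finset.coe_max' hf', ← Finset.coe_max' hg', WithBot.coe_add]
  refine le_antisymm ?_ ?_
  · simp only [degree_eq_supDegree]
    exact AddMonoidAlgebra.supDegree_mul_le (fun _ _ => WithBot.coe_add ..)
  · exact hdeg ▸ Finset.le_max (Finsupp.mem_support_iff.2 hab)

end Semiring

variable {R : Type*} [CommRing R] [IsDomain R]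

/-- `ℤᵐ⁰` is `WithBot ℤ` written multiplicatively (`WithZero.toMulBot` is the identity), so this
valuation is `f.degree` itself. -/
noncomputable def degreeValuation : Valuation R[T;T⁻¹] ℤᵐ⁰ where
  toFun f := WithZero.toMulBot.symm (Multiplicative.ofAdd f.degree)
  map_zero' := rfl
  map_one' := by rw [degree_one]; rfl
  map_mul' f g := by rw [degree_mul, ofAdd_add, map_mul]
  map_add_le_max' f g := degree_add_le f g

lemma degreeValuation_lt_iff {f g : R[T;T⁻¹]} :
    degreeValuation f < degreeValuation g ↔ f.degree < g.degree :=
  Iff.rfl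

end LaurentPolynomial

lemma degM_lt_degM_iff {m : ℕ} {α β : Lm m} :
    degM α < degM β ↔ (invert β).degree < (invert α).degree := by
  simp only [degM, Finset.min_eq_inf_withTop, Finset.inf_lt_iff, Finsupp.mem_support_iff, ne_eq,
    WithTop.coe_lt_top, Finset.lt_inf_iff, WithTop.coe_lt_coe, degree, Finset.max_eq_sup_withBot,
    Finset.lt_sup_iff, invert_apply, WithBot.bot_lt_coe, Finset.sup_lt_iff, WithBot.coe_lt_coe]
  constructor
  · rintro ⟨a, ha, h⟩
    exact ⟨-a, by rwa [neg_neg], fun b hb => lt_neg.1 (h _ hb)⟩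
  · rintro ⟨a, ha, h⟩
    exact ⟨-a, ha, fun b hb => neg_lt.1 (h _ (by rwa [neg_neg]))⟩

lemma degM_one {m : ℕ} [Nontrivial (ZMod m)] : degM (1 : Lm m) = 0 := by
  rw [degM, AddMonoidAlgebra.one_def, AddMonoidAlgebra.coeff_single,
    Finsupp.support_single _ one_ne_zero, Finset.min_singleton]
  rfl

section Prime

variable {p : ℕ} [Fact p.Prime]

lemma degP_lt_degP_iff {α β : Lm p} : degP α < degP β ↔ degreeValuation α < degreeValuation β :=
  Iff.rfl

lemma degP_pos_iff {α : Lm p} : 0 < degP α ↔ 1 < degreeValuation α :=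
  Iff.rfl

lemma degM_neg_iff {α : Lm p} : degM α < 0 ↔ 1 < degreeValuation (invert α) := by
  rw [← degM_one (m := p), degM_lt_degM_iff, map_one, degree_one]
  rfl

lemma expansivePoly_iff {π : Polynomial (Lm p)} (hm : π.Monic) (hd : 1 ≤ π.natDegree) :
    ExpansivePoly π ↔ π.IsLastMaxCoeff degreeValuation 0 ∧
      π.IsLastMaxCoeff (degreeValuation.comap (invert (R := ZMod p)).toRingHom) 0 := by
  rw [hm.isLastMaxCoeff_zero_iff hd, hm.isLastMaxCoeff_zero_iff hd, ExpansivePoly]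
  simp only [degP_pos_iff, degP_lt_degP_iff, degM_neg_iff, degM_lt_degM_iff,
    ← degreeValuation_lt_iff, Valuation.comap_apply]
  refine and_iff_right_of_imp fun h h0 => ?_
  rw [h0, map_zero] at h
  exact not_lt_zero h.1.1

end Prime

/-- Lemma `pura`: for monic polynomials `π, ρ, τ` over `𝕃 p` (each of
degree at least 1) with `π = ρ · τ`, `π` is expansive iff both `ρ` and `τ` are expansive. -/
theorem stmt0 (p : ℕ) (hp : p.Prime)
    (π ρ τ : Polynomial (Lm p))
    (hπm : π.Monic) (hρm : ρ.Monic) (hτm : τ.Monic)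
    (hπd : 1 ≤ π.natDegree) (hρd : 1 ≤ ρ.natDegree) (hτd : 1 ≤ τ.natDegree)
    (hmul : π = ρ * τ) :
    ExpansivePoly π ↔ (ExpansivePoly ρ ∧ ExpansivePoly τ) := by
  have : Fact p.Prime := ⟨hp⟩
  rw [expansivePoly_iff hπm hπd, expansivePoly_iff hρm hρd, expansivePoly_iff hτm hτd, hmul,
    Polynomial.isLastMaxCoeff_zero_mul_iff, Polynomial.isLastMaxCoeff_zero_mul_iff]
  tauto
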